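/- Define Â(n; d_1,…,d_r) := Σ_{j=0}^{r} (-1)^{n+r+j} Σ_{1 ≤ k_1 < ⋯ < k_j ≤ r} C(c_1/2 - 1 + d_{k_1} + ⋯ + d_{k_j}, n+r), where c_1 = n + r + 1 - Σ d_i is even and all d_i > 1. If c_1 < 0 and n is even then Â(n; d) ≥ 2·C(n + 1 - c_1/2, n+1) > 0; if n is odd then Â(n; d) = 0. -/

import Mathlib

open Finset

/-- Generalized binomial coefficient `C(a, k) = a(a-1)⋯(a-k+1)/k!`. -/
def gbc (a : ℚ) (k : ℕ) : ℚ :=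
  (∏ i ∈ Finset.range k, (a - i)) / (Nat.factorial k)


/-- The Â-genus of the spin complete intersection `X_n(d₁,…,d_r)`, i.e.
`χ(X_n(d), K^{1/2})`, via the combinatorial formula. -/
def Ahat (n r : ℕ) (d : Fin r → ℤ) : ℚ :=
  ∑ S ∈ (Finset.univ : Finset (Fin r)).powerset,
    (-1) ^ (n + r + S.card) *
      gbc (((n : ℚ) + r + 1 - ∑ i, (d i : ℚ)) / 2 - 1 + ∑ i ∈ S, (d i : ℚ)) (n + r)

/-!
Put `e = c₁/2 - 1` and let `L_t = chooseSum e t` be the linear functional `X^K ↦ C(e + K, t)`.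
Pascal's rule gives `L_{t+1}(p · (X - 1)) = L_t(p)`, and expanding `∏ (X^{d_i} - 1)` over subsets
shows `Â(n; d) = (-1)^n L_n(Q)` with `Q = ∏ (1 + X + ⋯ + X^{d_i - 1})`, a palindromic polynomial
of degree `N = n - 1 - 2e` all of whose coefficients in degrees `0, …, N` are at least `1`.

The reflection `C(t - 1 - y, t) = (-1)^t C(y, t)` pairs the terms `K` and `N - K` of `L_n(Q)`,
so `L_n(Q) = (-1)^n L_n(Q)` and `Â` vanishes for odd `n`. For even `n` and `c₁ < 0`, every
`C(e + K, n)` is a binomial coefficient of an integer with even lower index, hence nonnegative,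
so `L_n(Q) ≥ ∑_{K ≤ N} C(e + K, n)`, which telescopes to
`C(n - e, n + 1) - C(e, n + 1) = 2 C(n + 1 - c₁/2, n + 1)`.
-/

open Polynomial

theorem gbc_eq_choose (a : ℚ) (k : ℕ) : gbc a k = Ring.choose a k := by
  rw [gbc, Ring.choose_eq_smul, ← descPochhammer_eval_eq_prod_range, smul_eq_mul, div_eq_inv_mul,
    ← aeval_eq_smeval, ← eval_map_algebraMap, descPochhammer_map]

theorem gbc_pos {a : ℚ} {k : ℕ} (ha : (k : ℚ) - 1 < a) : 0 < gbc a k := by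
  refine div_pos (prod_pos fun i hi => ?_) (by positivity)
  have : (i : ℚ) + 1 ≤ k := by exact_mod_cast mem_range.mp hi
  linarith

namespace Ring

variable {R : Type*} [CommRing R] [BinomialRing R]

theorem choose_sub_one_sub (y : R) (k : ℕ) :
    choose ((k : R) - 1 - y) k = (-1) ^ k * choose y k := by
  have h := choose_neg (y - k + 1) k
  rw [show -(y - k + 1) = (k : R) - 1 - y by ring, show y - k + 1 + k - 1 = y by ring] at h
  rw [h, Units.smul_def, Int.negOnePow_def]
  simp

theorem choose_intCast_nonneg [PartialOrder R] [IsOrderedRing R] (z : ℤ) {k : ℕ} (hk : Even k) :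
    0 ≤ choose (z : R) k := by
  obtain ⟨m, rfl | rfl⟩ := Int.eq_nat_or_neg z
  · rw [Int.cast_natCast, choose_natCast]
    exact Nat.cast_nonneg _
  · rw [Int.cast_neg, Int.cast_natCast, choose_neg, Int.negOnePow_even _ (by exact_mod_cast hk),
      one_smul]
    rcases k with _ | k
    · simp
    · rw [show (m : R) + (k + 1 : ℕ) - 1 = (m + k : ℕ) by push_cast; ring, choose_natCast]
      exact Nat.cast_nonneg _

end Ring

namespace Polynomial

section GeomSum

theorem coeff_geom_sum_X {R : Type*} [Semiring R] (m K : ℕ) :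
    (∑ j ∈ range m, (X : R[X]) ^ j).coeff K = if K < m then 1 else 0 := by
  simp [coeff_X_pow]

theorem natDegree_geom_sum_X {R : Type*} [Semiring R] [Nontrivial R] (m : ℕ) :
    (∑ j ∈ range m, (X : R[X]) ^ j).natDegree = m - 1 := by
  rcases Nat.eq_zero_or_pos m with rfl | hm
  · simp
  refine natDegree_eq_of_le_of_coeff_ne_zero ?_ (by simp [hm])
  exact natDegree_le_iff_coeff_eq_zero.mpr fun K hK => by
    rw [coeff_geom_sum_X, if_neg (by omega)]

theorem reverse_geom_sum_X {R : Type*} [Semiring R] (m : ℕ) :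
    (∑ j ∈ range m, (X : R[X]) ^ j).reverse = ∑ j ∈ range m, X ^ j := by
  nontriviality R
  ext K
  rw [coeff_reverse, natDegree_geom_sum_X]
  rcases le_or_gt K (m - 1) with hK | hK
  · rw [revAt_le hK, coeff_geom_sum_X, coeff_geom_sum_X]
    split_ifs <;> first | rfl | omega
  · rw [revAt_eq_self_of_lt hK]

variable {ι : Type*} (s : Finset ι) (δ : ι → ℕ)

theorem prod_X_pow_sub_one {R : Type*} [CommRing R] [DecidableEq ι] :
    ∏ i ∈ s, (X ^ δ i - 1 : R[X]) = ∑ S ∈ s.powerset, (-1 : R) ^ #(s \ S) • X ^ ∑ i ∈ S, δ i := by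
  simp_rw [sub_eq_add_neg, prod_add, prod_const, prod_pow_eq_pow_sum]
  exact sum_congr rfl fun S _ => by simp [Algebra.smul_def, mul_comm]

theorem reverse_prod_geom_sum_X {R : Type*} [CommSemiring R] [NoZeroDivisors R] :
    (∏ i ∈ s, ∑ j ∈ range (δ i), (X : R[X]) ^ j).reverse = ∏ i ∈ s, ∑ j ∈ range (δ i), X ^ j := by
  classical
  induction s using Finset.induction_on with
  | empty => simpa using reverse_C (1 : R)
  | insert a s ha ih => rw [prod_insert ha, reverse_mul_of_domain, ih, reverse_geom_sum_X]

theorem natDegree_prod_geom_sum_X {R : Type*} [CommSemiring R] [NoZeroDivisors R] [Nontrivial R]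
    (hδ : ∀ i ∈ s, 1 ≤ δ i) :
    (∏ i ∈ s, ∑ j ∈ range (δ i), (X : R[X]) ^ j).natDegree = ∑ i ∈ s, (δ i - 1) := by
  rw [natDegree_prod _ _ fun i hi => ?_]
  · exact sum_congr rfl fun i _ => natDegree_geom_sum_X _
  · intro h
    simpa [Nat.one_le_iff_ne_zero.mp (hδ i hi)] using congr_arg (coeff · 0) h

section Ordered

variable {R : Type*} [CommSemiring R] [PartialOrder R] [IsOrderedRing R]

theorem coeff_mul_nonneg {p q : R[X]} (hp : ∀ k, 0 ≤ p.coeff k) (hq : ∀ k, 0 ≤ q.coeff k)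
    (k : ℕ) : 0 ≤ (p * q).coeff k := by
  rw [coeff_mul]
  exact sum_nonneg fun x _ => mul_nonneg (hp _) (hq _)

theorem coeff_mul_coeff_le_coeff_mul {p q : R[X]} (hp : ∀ k, 0 ≤ p.coeff k)
    (hq : ∀ k, 0 ≤ q.coeff k) (i j : ℕ) : p.coeff i * q.coeff j ≤ (p * q).coeff (i + j) := by
  rw [coeff_mul]
  exact single_le_sum (f := fun x => p.coeff x.1 * q.coeff x.2)
    (fun x _ => mul_nonneg (hp _) (hq _)) (mem_antidiagonal.mpr rfl : (i, j) ∈ antidiagonal (i + j))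

theorem coeff_geom_sum_X_nonneg (m K : ℕ) : 0 ≤ (∑ j ∈ range m, (X : R[X]) ^ j).coeff K := by
  rw [coeff_geom_sum_X]
  split_ifs <;> simp

theorem coeff_prod_geom_sum_X_nonneg (K : ℕ) :
    0 ≤ (∏ i ∈ s, ∑ j ∈ range (δ i), (X : R[X]) ^ j).coeff K := by
  classical
  induction s using Finset.induction_on generalizing K with
  | empty => rw [prod_empty, coeff_one]; split_ifs <;> simp
  | insert a s ha ih =>
    rw [prod_insert ha]
    exact coeff_mul_nonneg (coeff_geom_sum_X_nonneg _) ih K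

theorem one_le_coeff_prod_geom_sum_X (hδ : ∀ i ∈ s, 1 ≤ δ i) {K : ℕ}
    (hK : K ≤ ∑ i ∈ s, (δ i - 1)) : 1 ≤ (∏ i ∈ s, ∑ j ∈ range (δ i), (X : R[X]) ^ j).coeff K := by
  classical
  induction s using Finset.induction_on generalizing K with
  | empty => simp_all
  | insert a s ha ih =>
    rw [sum_insert ha] at hK
    have hδa := hδ a (mem_insert_self a s)
    obtain ⟨i, j, rfl, hi, hj⟩ : ∃ i j, K = i + j ∧ i < δ a ∧ j ≤ ∑ i ∈ s, (δ i - 1) :=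
      ⟨min K (δ a - 1), K - min K (δ a - 1), by omega, by omega, by omega⟩
    rw [prod_insert ha]
    calc (1 : R) = 1 * 1 := (mul_one 1).symm
      _ ≤ _ := mul_le_mul (by simp [hi]) (ih (fun i hi => hδ i (mem_insert_of_mem hi)) hj)
          zero_le_one (coeff_geom_sum_X_nonneg _ _)
      _ ≤ _ := coeff_mul_coeff_le_coeff_mul (coeff_geom_sum_X_nonneg _)
          (coeff_prod_geom_sum_X_nonneg s δ) i j

end Ordered

end GeomSum

section ChooseSum

variable {R : Type*} [CommRing R] [BinomialRing R]

noncomputable def chooseSum (x : R) (t : ℕ) : R[X] →ₗ[R] R :=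
  lsum fun K => LinearMap.mulRight R (Ring.choose (x + K) t)

theorem chooseSum_apply (x : R) (t : ℕ) (p : R[X]) :
    chooseSum x t p = p.sum fun K c => c * Ring.choose (x + K) t := rfl

@[simp]
theorem chooseSum_monomial (x : R) (t K : ℕ) (c : R) :
    chooseSum x t (monomial K c) = c * Ring.choose (x + K) t := by
  simp [chooseSum_apply]

@[simp]
theorem chooseSum_X_pow (x : R) (t K : ℕ) : chooseSum x t (X ^ K) = Ring.choose (x + K) t := by
  simp [← monomial_one_right_eq_X_pow]

theorem chooseSum_eq_sum_range (x : R) (t : ℕ) {p : R[X]} {M : ℕ} (hp : p.natDegree < M) :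
    chooseSum x t p = ∑ K ∈ range M, p.coeff K * Ring.choose (x + K) t :=
  sum_over_range' p (f := fun K c => c * Ring.choose (x + K) t) (fun _ => zero_mul _) M hp

theorem chooseSum_mul_X_sub_one (x : R) (t : ℕ) (p : R[X]) :
    chooseSum x (t + 1) (p * (X - 1)) = chooseSum x t p := by
  induction p using Polynomial.induction_on' with
  | add p q hp hq => rw [add_mul, map_add, map_add, hp, hq]
  | monomial K c =>
    rw [mul_sub, mul_one, monomial_mul_X, map_sub, chooseSum_monomial, chooseSum_monomial,
      chooseSum_monomial, Nat.cast_succ, ← add_assoc, Ring.choose_succ_succ]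
    ring

theorem chooseSum_mul_X_sub_one_pow (x : R) (t m : ℕ) (p : R[X]) :
    chooseSum x (t + m) (p * (X - 1) ^ m) = chooseSum x t p := by
  induction m with
  | zero => simp
  | succ m ih => rw [pow_succ, ← mul_assoc, ← add_assoc, chooseSum_mul_X_sub_one, ih]

theorem chooseSum_prod_geom_sum_X {ι : Type*} [DecidableEq ι] (s : Finset ι) (δ : ι → ℕ)
    (x : R) (t : ℕ) :
    chooseSum x t (∏ i ∈ s, ∑ j ∈ range (δ i), X ^ j) =
      ∑ S ∈ s.powerset, (-1) ^ #(s \ S) * Ring.choose (x + ∑ i ∈ S, δ i) (t + #s) := by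
  rw [← chooseSum_mul_X_sub_one_pow x t #s, ← prod_const, ← prod_mul_distrib]
  simp_rw [geom_sum_mul]
  simp [prod_X_pow_sub_one]

theorem chooseSum_reverse (x : R) (t : ℕ) (p : R[X]) :
    chooseSum x t p.reverse = (-1) ^ t * chooseSum ((t : R) - 1 - x - p.natDegree) t p := by
  have hlt := Nat.lt_succ_self p.natDegree
  rw [chooseSum_eq_sum_range _ _ ((reverse_natDegree_le p).trans_lt hlt),
    chooseSum_eq_sum_range _ _ hlt, mul_sum, ← sum_range_reflect]
  refine sum_congr rfl fun K hK => ?_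
  have hK : K ≤ p.natDegree := Nat.lt_succ_iff.mp (mem_range.mp hK)
  rw [Nat.succ_sub_one, coeff_reverse, revAt_le (p.natDegree.sub_le K), Nat.sub_sub_self hK,
    Nat.cast_sub hK, mul_left_comm, ← Ring.choose_sub_one_sub]
  ring_nf

theorem chooseSum_eq_zero_of_reverse_eq {x : R} {t : ℕ} {p : R[X]} (hp : p.reverse = p)
    (ht : Odd t) (hx : 2 * x + p.natDegree + 1 = t) : chooseSum x t p = 0 := by
  have h := chooseSum_reverse x t p
  rw [hp, ht.neg_one_pow, show (t : R) - 1 - x - p.natDegree = x by rw [← hx]; ring,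
    neg_one_mul, eq_neg_iff_add_eq_zero, ← two_nsmul] at h
  have := BinomialRing.toIsAddTorsionFree (R := R)
  exact (nsmul_eq_zero_iff_right two_ne_zero).mp h

theorem _root_.Ring.sum_range_choose_add (x : R) (t M : ℕ) :
    ∑ K ∈ range M, Ring.choose (x + K) t = Ring.choose (x + M) (t + 1) - Ring.choose x (t + 1) := by
  have h := chooseSum_mul_X_sub_one x t (∑ j ∈ range M, X ^ j)
  rw [geom_sum_mul, map_sum, map_sub, chooseSum_X_pow, ← pow_zero X, chooseSum_X_pow] at h
  simp only [chooseSum_X_pow, Nat.cast_zero, add_zero] at h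
  exact h.symm

theorem _root_.Ring.sum_range_choose_add_eq_two_mul {x : R} {t M : ℕ} (ht : Even t)
    (hx : x + M = t - x) :
    ∑ K ∈ range M, Ring.choose (x + K) t = 2 * Ring.choose (x + M) (t + 1) := by
  have hrefl := Ring.choose_sub_one_sub (x + M) (t + 1)
  rw [show ((t + 1 : ℕ) : R) - 1 - (x + M) = x by push_cast; rw [hx]; ring,
    ht.add_one.neg_one_pow] at hrefl
  rw [Ring.sum_range_choose_add, hrefl]
  ring

end ChooseSum

section OrderedBinomialRing

variable {R ι : Type*} [CommRing R] [IsDomain R] [BinomialRing R] [PartialOrder R]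
  [IsOrderedRing R] (s : Finset ι) (δ : ι → ℕ)

theorem sum_range_choose_le_chooseSum_prod_geom_sum_X (hδ : ∀ i ∈ s, 1 ≤ δ i) {x : R} {t : ℕ}
    (hx : ∀ K : ℕ, 0 ≤ Ring.choose (x + K) t) :
    ∑ K ∈ range (∑ i ∈ s, (δ i - 1) + 1), Ring.choose (x + K) t ≤
      chooseSum x t (∏ i ∈ s, ∑ j ∈ range (δ i), X ^ j) := by
  rw [chooseSum_eq_sum_range _ _
    (by rw [natDegree_prod_geom_sum_X s δ hδ]; exact Nat.lt_succ_self _)]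
  exact sum_le_sum fun K hK => le_mul_of_one_le_left (hx K)
    (one_le_coeff_prod_geom_sum_X s δ hδ (Nat.lt_succ_iff.mp (mem_range.mp hK)))

theorem two_mul_choose_le_chooseSum_prod_geom_sum_X (hδ : ∀ i ∈ s, 1 ≤ δ i) {t : ℕ}
    (ht : Even t) {z : ℤ} (hz : 2 * z + ((∑ i ∈ s, (δ i - 1) : ℕ) : ℤ) = t + 1) :
    2 * Ring.choose ((t : R) + 1 - z) (t + 1) ≤
      chooseSum ((z : R) - 1) t (∏ i ∈ s, ∑ j ∈ range (δ i), X ^ j) := by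
  have hN : ((∑ i ∈ s, (δ i - 1) : ℕ) : R) = t + 1 - 2 * z := by
    have h := congr_arg (Int.cast : ℤ → R) hz
    simp only [Int.cast_add, Int.cast_mul, Int.cast_ofNat, Int.cast_natCast, Int.cast_one] at h
    linear_combination h
  calc 2 * Ring.choose ((t : R) + 1 - z) (t + 1)
      = ∑ K ∈ range (∑ i ∈ s, (δ i - 1) + 1), Ring.choose ((z : R) - 1 + K) t := by
        rw [Ring.sum_range_choose_add_eq_two_mul ht (by rw [Nat.cast_add_one, hN]; ring),
          Nat.cast_add_one, hN]
        ring_nf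
    _ ≤ _ := sum_range_choose_le_chooseSum_prod_geom_sum_X s δ hδ fun K => by
        simpa using Ring.choose_intCast_nonneg (R := R) (z - 1 + K) ht

end OrderedBinomialRing

end Polynomial

theorem Ahat_eq_chooseSum (n r : ℕ) (δ : Fin r → ℕ) :
    Ahat n r (fun i => (δ i : ℤ)) = (-1) ^ n *
      chooseSum (((n : ℚ) + r + 1 - ∑ i, (δ i : ℚ)) / 2 - 1) n
        (∏ i, ∑ j ∈ range (δ i), X ^ j) := by
  rw [chooseSum_prod_geom_sum_X, Ahat, mul_sum, card_univ, Fintype.card_fin]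
  refine sum_congr rfl fun S _ => ?_
  have hS : #S ≤ r := by simpa using card_le_univ S
  have hsign : (-1 : ℚ) ^ (n + r + #S) = (-1) ^ n * (-1) ^ #(univ \ S) := by
    rw [card_univ_sdiff, Fintype.card_fin, ← pow_add,
      show n + r + #S = n + (r - #S) + 2 * #S by omega, pow_add _ _ (2 * _), pow_mul]
    simp
  simp only [gbc_eq_choose, Int.cast_natCast, Nat.cast_sum, hsign, mul_assoc]

theorem Ahat_values_general (n r : ℕ) (d : Fin r → ℤ) (hd : ∀ i, 1 < d i)
    (heven : (2 : ℤ) ∣ ((n : ℤ) + r + 1 - ∑ i, d i)) :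
    ((n : ℤ) + r + 1 - ∑ i, d i < 0 → Even n →
      2 * gbc ((n : ℚ) + 1 - ((n : ℚ) + r + 1 - ∑ i, (d i : ℚ)) / 2) (n + 1) ≤ Ahat n r d ∧
      0 < 2 * gbc ((n : ℚ) + 1 - ((n : ℚ) + r + 1 - ∑ i, (d i : ℚ)) / 2) (n + 1)) ∧
    (Odd n → Ahat n r d = 0) := by
  lift d to Fin r → ℕ using fun i => (zero_lt_one.trans (hd i)).le
  simp only at hd heven
  have hδ : ∀ i ∈ univ, 1 ≤ d i := fun i _ => by exact_mod_cast (hd i).le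
  obtain ⟨z, hz⟩ := heven
  have hN : 2 * z + ((∑ i, (d i - 1) : ℕ) : ℤ) = n + 1 := by
    have hsub (i : Fin r) : ((d i - 1 : ℕ) : ℤ) = d i - 1 := by have := hδ i (mem_univ i); omega
    simp only [Nat.cast_sum, hsub, sum_sub_distrib, sum_const, card_univ, Fintype.card_fin,
      nsmul_eq_mul, mul_one]
    linarith
  have hc : ((n : ℚ) + r + 1 - ∑ i, (d i : ℚ)) / 2 = z := by
    rw [show ((n : ℚ) + r + 1 - ∑ i, (d i : ℚ)) = 2 * z by
      simpa using congr_arg (Int.cast : ℤ → ℚ) hz]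
    ring
  simp only [Int.cast_natCast, hc]
  rw [Ahat_eq_chooseSum, hc]
  refine ⟨fun hneg hn => ⟨?_, mul_pos two_pos (gbc_pos ?_)⟩, fun hn => ?_⟩
  · rw [hn.neg_one_pow, one_mul, gbc_eq_choose]
    exact two_mul_choose_le_chooseSum_prod_geom_sum_X univ d hδ hn hN
  · have hz0 : (z : ℚ) < 0 := by exact_mod_cast (by linarith : z < 0)
    push_cast
    linarith
  · rw [chooseSum_eq_zero_of_reverse_eq (reverse_prod_geom_sum_X _ _) hn, mul_zero]
    rw [natDegree_prod_geom_sum_X _ _ hδ]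
    have hNq : (2 * z + (∑ i, (d i - 1) : ℕ) : ℚ) = n + 1 := by exact_mod_cast hN
    linarith

theorem Ahat_values (n r : ℕ) (hr : 1 ≤ r) (d : Fin r → ℤ) (hd : ∀ i, 1 < d i)
    (heven : (2 : ℤ) ∣ ((n : ℤ) + r + 1 - ∑ i, d i)) :
    ((n : ℤ) + r + 1 - ∑ i, d i < 0 → Even n →
      2 * gbc ((n : ℚ) + 1 - ((n : ℚ) + r + 1 - ∑ i, (d i : ℚ)) / 2) (n + 1) ≤ Ahat n r d ∧
      0 < 2 * gbc ((n : ℚ) + 1 - ((n : ℚ) + r + 1 - ∑ i, (d i : ℚ)) / 2) (n + 1)) ∧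
    (Odd n → Ahat n r d = 0) :=
  Ahat_values_general n r d hd heven
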